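/- arXiv:1105.4317 — 4 statements merged into one kernel-verified Lean document; each statement's English description precedes it below -/
import Mathlib

section
/- For all complex numbers x, y, a and every natural number n, (x+y)^n = \sum_{k=0}^n \binom{n}{k} x(x+ka)^{k-1} (y-ka)^{n-k}, where for k=0 the term x(x+ka)^{k-1} is interpreted as 1. -/
noncomputable def abelPoly (x a : ℂ) (k : ℕ) : ℂ :=
  if k = 0 then 1 else x * (x + k * a) ^ (k - 1)

/-!
Write `S_n(y) = ∑ₖ (n choose k) pₖ (y - k a)^(n-k)` for an arbitrary sequence `p` with
`p₀ = 1`. Differentiating in `y` gives `S_{n+1}' = (n+1) S_n`, exactly as for `(x + y)^n`, so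
by induction `S_n = (x + y)^n` as soon as `S_{n+1}(-x) = 0` for all `n`. For the Abel polynomials
`S_{n+1}(-x) = x ∑ₖ (-1)^(n+1-k) (n+1 choose k) (x + k a)^n` is `x` times an `(n+1)`-st forward
difference of a polynomial of degree `n` in `k`, hence zero.
-/

open Polynomial Finset fwdDiff

section ShiftedBinomial

variable {R : Type*} [CommRing R]

theorem sum_range_neg_one_pow_mul_choose_mul_pow_eq_zero (x a : R) {m n : ℕ} (h : m < n) :
    ∑ k ∈ range (n + 1), (-1) ^ (n - k) * (n.choose k : R) * (x + k * a) ^ m = 0 := by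
  have hdeg : ((C a * X + C x) ^ m).natDegree < n :=
    (natDegree_pow_le_of_le m (natDegree_linear_le (a := a) (b := x))).trans_lt (by lia)
  have := congr_fun (fwdDiff_iter_eq_zero_of_degree_lt hdeg) 0
  rw [fwdDiff_iter_eq_sum_shift] at this
  simpa [zsmul_eq_mul, add_comm x, mul_comm a] using this

noncomputable def shiftedBinomialSum (p : ℕ → R) (a : R) (n : ℕ) : R[X] :=
  ∑ k ∈ range (n + 1), C (n.choose k * p k) * (X - C (k * a)) ^ (n - k)

theorem eval_shiftedBinomialSum (p : ℕ → R) (a y : R) (n : ℕ) :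
    (shiftedBinomialSum p a n).eval y =
      ∑ k ∈ range (n + 1), (n.choose k : R) * p k * (y - k * a) ^ (n - k) := by
  simp [shiftedBinomialSum, eval_finsetSum]

theorem derivative_shiftedBinomialSum (p : ℕ → R) (a : R) (n : ℕ) :
    derivative (shiftedBinomialSum p a (n + 1)) =
      C ((n + 1 : ℕ) : R) * shiftedBinomialSum p a n := by
  rw [shiftedBinomialSum, derivative_sum, sum_range_succ, shiftedBinomialSum, mul_sum]
  simp only [derivative_C_mul, derivative_X_sub_C_pow, Nat.sub_self, Nat.cast_zero, C_0, zero_mul,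
    mul_zero, add_zero]
  refine sum_congr rfl fun k _ => ?_
  have hsub : n + 1 - k - 1 = n - k := by lia
  have hchoose :
      ((n + 1).choose k : R) * ((n + 1 - k : ℕ) : R) = (n.choose k : R) * (n + 1 : ℕ) := by
    rw [← Nat.cast_mul, ← Nat.cast_mul, Nat.choose_mul_succ_eq]
  rw [hsub, ← mul_assoc, ← C_mul, ← mul_assoc, ← C_mul]
  congr 2
  linear_combination p k * hchoose

theorem shiftedBinomialSum_eq_X_add_C_pow [IsAddTorsionFree R] (p : ℕ → R) (a x : R)
    (h0 : p 0 = 1) (hroot : ∀ n, (shiftedBinomialSum p a (n + 1)).eval (-x) = 0) (n : ℕ) :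
    shiftedBinomialSum p a n = (X + C x) ^ n := by
  induction n with
  | zero => simp [shiftedBinomialSum, h0]
  | succ n ih =>
    set Q := shiftedBinomialSum p a (n + 1) - (X + C x) ^ (n + 1)
    have hQ' : derivative Q = 0 := by
      simp [Q, derivative_shiftedBinomialSum, derivative_X_add_C_pow, ih]
    have hQ : Q = C (Q.coeff 0) := eq_C_of_derivative_eq_zero hQ'
    have hQ0 : Q.coeff 0 = 0 := by
      rw [← eval_C (a := Q.coeff 0) (x := -x), ← hQ]
      simp [Q, hroot]
    exact sub_eq_zero.mp (show Q = 0 by rw [hQ, hQ0, C_0])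

end ShiftedBinomial

theorem abelPoly_mul_neg_add_pow (x a : ℂ) {k m : ℕ} (hk : k ≤ m + 1) :
    abelPoly x a k * (-x - k * a) ^ (m + 1 - k) = x * ((-1) ^ (m + 1 - k) * (x + k * a) ^ m) := by
  rcases k with _ | k
  · simp only [abelPoly, if_pos, Nat.cast_zero, zero_mul, sub_zero, add_zero, Nat.sub_zero,
      neg_pow x, pow_succ]
    ring
  · obtain ⟨j, rfl⟩ := Nat.exists_eq_add_of_le (Nat.le_of_succ_le_succ hk)
    have hneg : -x - ((k + 1 : ℕ) : ℂ) * a = -(x + ((k + 1 : ℕ) : ℂ) * a) := by ring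
    simp only [abelPoly, if_neg k.succ_ne_zero, Nat.add_sub_cancel,
      show k + j + 1 - (k + 1) = j by lia, hneg, neg_pow (x + _), pow_add]
    ring

theorem eval_neg_shiftedBinomialSum_abelPoly (x a : ℂ) (n : ℕ) :
    (shiftedBinomialSum (abelPoly x a) a (n + 1)).eval (-x) = 0 := by
  rw [eval_shiftedBinomialSum]
  calc _ = x * ∑ k ∈ range (n + 1 + 1),
          (-1) ^ (n + 1 - k) * ((n + 1).choose k : ℂ) * (x + k * a) ^ n := by
        rw [mul_sum]
        refine sum_congr rfl fun k hk => ?_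
        rw [mul_assoc, abelPoly_mul_neg_add_pow x a (by simpa [Nat.lt_succ_iff] using hk)]
        ring
    _ = 0 := by rw [sum_range_neg_one_pow_mul_choose_mul_pow_eq_zero x a n.lt_succ_self, mul_zero]

/-- The classical Abel identity. -/
theorem abel_identity (x y a : ℂ) (n : ℕ) :
    (x + y) ^ n =
      ∑ k ∈ Finset.range (n + 1),
        (n.choose k : ℂ) * abelPoly x a k * (y - k * a) ^ (n - k) := by
  have h := congr_arg (eval y) <| shiftedBinomialSum_eq_X_add_C_pow (abelPoly x a) a x
    (by simp [abelPoly]) (eval_neg_shiftedBinomialSum_abelPoly x a) n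
  rw [eval_shiftedBinomialSum] at h
  simpa [add_comm y] using h.symm
end

section
/- Let q(x) be a polynomial of degree at most n over \mathbb{C} and let a, y, d be complex numbers. Then q(d+y) = \sum_{k=0}^n \frac{q^{(k)}(d+ka)}{k!}\, y(y-ka)^{k-1}, where for k=0 the factor y(y-ka)^{k-1} is interpreted as 1 and q^{(k)} denotes the k-th derivative. -/
open Polynomial

/-! Write `A_k` for `abelPoly a k`. Then `A_{k+1}' = (k+1) A_k(x - a)` and `A_k(0) = 0` for `k > 0`,
so both sides of the expansion of `q(d + x)` take the value `q(d)` at `0`, while their derivatives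
are the two sides of the expansion of `q'(d + a + x)`, shifted by `x ↦ x - a`; the latter holds
by induction on the degree. -/

namespace Polynomial

section CommRing

variable {R : Type*} [CommRing R] (a : R)

noncomputable def abelPoly (k : ℕ) : R[X] :=
  if k = 0 then 1 else X * (X - C (k * a)) ^ (k - 1)

@[simp]
theorem abelPoly_zero : abelPoly a 0 = 1 := rfl

theorem abelPoly_succ (k : ℕ) : abelPoly a (k + 1) = X * (X - C ((k + 1 : ℕ) * a)) ^ k := rfl

theorem eval_abelPoly (k : ℕ) (y : R) :
    (abelPoly a k).eval y = if k = 0 then 1 else y * (y - k * a) ^ (k - 1) := by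
  unfold abelPoly; split_ifs <;> simp

theorem eval_zero_abelPoly_succ (k : ℕ) : (abelPoly a (k + 1)).eval 0 = 0 := by
  simp [abelPoly_succ]

theorem derivative_abelPoly_succ (k : ℕ) :
    derivative (abelPoly a (k + 1)) = C ((k + 1 : ℕ) : R) * (abelPoly a k).comp (X - C a) := by
  rcases k with _ | k
  · simp [abelPoly_succ]
  · have hshift : X - C a - C ((k + 1 : ℕ) * a) = X - C ((k + 1 + 1 : ℕ) * a) := by
      rw [sub_sub, ← C_add]; congr 2; push_cast; ring
    rw [abelPoly_succ, abelPoly_succ, derivative_mul, derivative_X, derivative_X_sub_C_pow,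
      mul_comp, X_comp, pow_comp, sub_comp, X_comp, C_comp, hshift, C_mul, map_natCast]
    simp only [Nat.cast_add, Nat.cast_one, map_add, map_one, map_natCast, add_tsub_cancel_right]
    ring

end CommRing

theorem eq_of_derivative_eq_of_eval_zero_eq {R : Type*} [Ring R] [IsAddTorsionFree R]
    {p q : R[X]} (hd : derivative p = derivative q) (h0 : p.eval 0 = q.eval 0) : p = q := by
  have hconst := eq_C_of_derivative_eq_zero (p := p - q) (by rw [derivative_sub, hd, sub_self])
  rw [coeff_zero_eq_eval_zero, eval_sub, h0, sub_self, map_zero, sub_eq_zero] at hconst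
  exact hconst

theorem comp_C_add_X_eq_sum_abelPoly {K : Type*} [Field K] [CharZero K] {n : ℕ} {q : K[X]}
    (hq : q.natDegree ≤ n) (a d : K) :
    q.comp (C d + X) = ∑ k ∈ Finset.range (n + 1),
      C ((derivative^[k] q).eval (d + k * a) / k.factorial) * abelPoly a k := by
  induction n generalizing q d with
  | zero => rw [eq_C_of_natDegree_le_zero hq]; simp
  | succ n ih =>
    apply eq_of_derivative_eq_of_eval_zero_eq
    · have hdq : (derivative q).natDegree ≤ n := by
        rw [natDegree_derivative]; omega
      have hcoeff (k : ℕ) :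
          C ((derivative^[k + 1] q).eval (d + (k + 1 : ℕ) * a) / (k + 1).factorial) *
              C ((k + 1 : ℕ) : K) =
            C ((derivative^[k] (derivative q)).eval (d + a + k * a) / k.factorial) := by
        rw [← C_mul, Function.iterate_succ_apply, Nat.factorial_succ, Nat.cast_mul,
          show d + (k + 1 : ℕ) * a = d + a + k * a by push_cast; ring]
        field_simp
      calc derivative (q.comp (C d + X))
          = (q.derivative.comp (C (d + a) + X)).comp (X - C a) := by
            rw [derivative_comp, comp_assoc]
            simp only [derivative_C, derivative_X, zero_add, one_mul, map_add,
              add_comp, C_comp, X_comp, add_add_sub_cancel]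
        _ = _ := by
            rw [ih hdq, sum_comp, derivative_sum, Finset.sum_range_succ' _ (n + 1)]
            simp only [derivative_C_mul, abelPoly_zero, derivative_one, mul_zero, add_zero,
              derivative_abelPoly_succ, mul_comp, C_comp, ← mul_assoc, hcoeff]
    · simp only [eval_comp, eval_add, eval_C, eval_X, add_zero, eval_finsetSum, eval_mul,
        Finset.sum_range_succ', eval_zero_abelPoly_succ, mul_zero, Finset.sum_const_zero, zero_add,
        CharP.cast_eq_zero, zero_mul, Function.iterate_zero, id_eq, Nat.factorial_zero,
        Nat.cast_one, div_one, abelPoly_zero, mul_one]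

end Polynomial

/-- Abel expansion of an arbitrary polynomial of degree at most `n`:
`q(d+y) = ∑_{k=0}^n q^{(k)}(d + k a)/k! ⬝ y (y - k a)^{k-1}`. -/
theorem abel_expansion (n : ℕ) (q : Polynomial ℂ) (hq : q.natDegree ≤ n) (a y d : ℂ) :
    q.eval (d + y) =
      ∑ k ∈ Finset.range (n + 1),
        ((Polynomial.derivative^[k] q).eval (d + k * a) / (k.factorial : ℂ)) *
          (if k = 0 then 1 else y * (y - k * a) ^ (k - 1)) := by
  calc q.eval (d + y) = (q.comp (C d + X)).eval y := by rw [eval_comp, eval_add, eval_C, eval_X]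
    _ = _ := by
      rw [comp_C_add_X_eq_sum_abelPoly hq a d, eval_finsetSum]
      simp only [eval_mul, eval_C, eval_abelPoly]
end

section
/- Let f(z) and g(z) be formal power series over \mathbb{C} with g(0)=1, and let w(z) be the compositional inverse of z g(z). Then for all n\ge 1, the coefficient of z^n in f(w(z)) equals (1/n) times the coefficient of z^{n-1} in f'(z)\,g(z)^{-n}. -/
open PowerSeries

/-- Composition `f ∘ g` of formal power series (the intended use is when the
constant coefficient of `g` vanishes, in which case the defining sum is the
honest composition). -/
noncomputable def psComp (f g : PowerSeries ℂ) : PowerSeries ℂ :=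
  PowerSeries.mk fun n => ∑ k ∈ Finset.range (n + 1),
    (PowerSeries.coeff k f) * (PowerSeries.coeff n (g ^ k))

/-!
Put `φ = X * g` and `A = f ∘ w`. A right inverse of `φ` is also a left inverse, so `f = A ∘ φ`, and
by linearity `[z^{n-1}] f' g⁻ⁿ = ∑ₖ [zᵏ]A · [z^{n-1}] (φᵏ)' g⁻ⁿ`. Only `k = n` contributes, with
value `n`. For `k < n` this is the classical fact that `(φᵏ)' φ⁻ⁿ = k/(k-n) · (φ^{k-n})'` is a
derivative and so has no residue; without negative powers of `X` it says that, with `u = g⁻¹` and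
`m = n - k`, the series `m uᵐ - X (uᵐ)'` has no `Xᵐ` term.
-/

open Finset

section CommSemiring

variable {R : Type*} [CommSemiring R]

theorem coeff_pow_eq_zero_of_lt {w : R⟦X⟧} (hw : constantCoeff w = 0) {n k : ℕ} (h : n < k) :
    coeff n (w ^ k) = 0 :=
  X_pow_dvd_iff.mp (pow_dvd_pow_of_dvd (X_dvd_iff.mpr hw) k) n h

theorem coeff_X_mul_derivative (p : R⟦X⟧) (n : ℕ) :
    coeff n (X * d⁄dX R p) = n * coeff n p := by
  cases n with
  | zero => simp
  | succ n => rw [coeff_succ_X_mul, coeff_derivative, mul_comm, Nat.cast_succ]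

theorem X_pow_dvd_derivative {F : R⟦X⟧} {n : ℕ} (h : X ^ (n + 1) ∣ F) : X ^ n ∣ d⁄dX R F :=
  X_pow_dvd_iff.mpr fun m hm => by
    rw [coeff_derivative, X_pow_dvd_iff.mp h (m + 1) (by omega), zero_mul]

end CommSemiring

theorem subst_eq_X_of_subst_eq_X {R : Type*} [CommRing R] {φ w : R⟦X⟧}
    (hφ : constantCoeff φ = 0) (hφ₁ : IsUnit (coeff 1 φ)) (hw : HasSubst w)
    (hφw : subst w φ = (X : R⟦X⟧)) : subst φ w = (X : R⟦X⟧) := by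
  set ψ := substInvOfIsUnit φ hφ₁
  have hψ : ψ = w := calc
    ψ = subst (subst w φ) ψ := by rw [hφw, X_subst]
    _ = subst w (subst φ ψ) :=
      (subst_comp_subst_apply (HasSubst.of_constantCoeff_zero' hφ) hw ψ).symm
    _ = w := by rw [subst_substInvOfIsUnit_left φ hφ hφ₁, subst_X hw]
  rw [← hψ, subst_substInvOfIsUnit_left φ hφ hφ₁]

section Field

variable {K : Type*} [Field K] [CharZero K]

theorem coeff_inv_pow_add_X_mul_inv_pow_succ_mul_derivative (g : K⟦X⟧) {m : ℕ} (hm : m ≠ 0) :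
    coeff m (g⁻¹ ^ m + X * (g⁻¹ ^ (m + 1) * d⁄dX K g)) = 0 := by
  have hderiv : d⁄dX K (g⁻¹ ^ m) = -((m : K) • (g⁻¹ ^ (m + 1) * d⁄dX K g)) := by
    obtain ⟨m, rfl⟩ := Nat.exists_eq_add_one.mpr (Nat.pos_of_ne_zero hm)
    rw [derivative_pow, derivative_inv', Nat.add_sub_cancel, Nat.cast_smul_eq_nsmul, nsmul_eq_mul]
    ring
  have hEuler := coeff_X_mul_derivative (g⁻¹ ^ m) m
  rw [hderiv, mul_neg, mul_smul_comm, map_neg, map_smul, smul_eq_mul] at hEuler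
  rw [map_add]
  exact (mul_eq_zero.mp (by linear_combination -hEuler)).resolve_left (Nat.cast_ne_zero.mpr hm)

theorem coeff_derivative_X_mul_pow_mul_inv_pow {g : K⟦X⟧} (hg : constantCoeff g ≠ 0) (k p : ℕ) :
    coeff p (d⁄dX K ((X * g) ^ k) * g⁻¹ ^ (p + 1)) = if k = p + 1 then (p + 1 : K) else 0 := by
  obtain _ | j := k
  · simp
  have hexpand : d⁄dX K ((X * g) ^ (j + 1)) * g⁻¹ ^ (p + 1) =
      X ^ j * ((j + 1) • (g ^ j * (g + X * d⁄dX K g) * g⁻¹ ^ (p + 1))) := by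
    rw [derivative_pow, Derivation.leibniz, derivative_X, Nat.add_sub_cancel, nsmul_eq_mul]
    simp only [smul_eq_mul]
    ring
  rw [hexpand, coeff_X_pow_mul', map_nsmul, nsmul_eq_mul]
  rcases le_or_gt j p with hjp | hpj
  · obtain ⟨m, rfl⟩ := Nat.exists_eq_add_of_le hjp
    have hcancel : g ^ j * (g + X * d⁄dX K g) * g⁻¹ ^ (j + m + 1) =
        g⁻¹ ^ m + X * (g⁻¹ ^ (m + 1) * d⁄dX K g) := calc
      _ = (g * g⁻¹) ^ j * ((g * g⁻¹) * g⁻¹ ^ m + X * (g⁻¹ ^ (m + 1) * d⁄dX K g)) := by ring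
      _ = _ := by rw [PowerSeries.mul_inv_cancel g hg, one_pow, one_mul, one_mul]
    rw [if_pos (Nat.le_add_right j m), Nat.add_sub_cancel_left, hcancel]
    rcases eq_or_ne m 0 with rfl | hm
    · simp
    · rw [coeff_inv_pow_add_X_mul_inv_pow_succ_mul_derivative g hm, mul_zero, if_neg (by omega)]
  · rw [if_neg (by omega), if_neg (by omega)]

end Field

section Composition

variable {φ : ℂ⟦X⟧}

theorem psComp_eq_subst (f : ℂ⟦X⟧) (hφ : constantCoeff φ = 0) : psComp f φ = subst φ f := by
  ext n
  rw [coeff_subst' (HasSubst.of_constantCoeff_zero' hφ),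
    finsum_eq_sum_of_support_subset _ (s := range (n + 1))]
  · simp [psComp]
  · refine Function.support_subset_iff'.mpr fun k hk => ?_
    rw [coeff_pow_eq_zero_of_lt hφ (by simpa using hk), smul_zero]

theorem X_pow_dvd_psComp_sub_sum (A : ℂ⟦X⟧) (hφ : constantCoeff φ = 0) (N : ℕ) :
    X ^ N ∣ psComp A φ - ∑ k ∈ range N, coeff k A • φ ^ k := by
  refine X_pow_dvd_iff.mpr fun m hm => ?_
  rw [map_sub, sub_eq_zero, map_sum, psComp, coeff_mk]
  simp only [map_smul, smul_eq_mul]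
  exact sum_subset (range_subset_range.mpr hm) fun k _ hk => by
    rw [coeff_pow_eq_zero_of_lt hφ (by simpa using hk), mul_zero]

theorem coeff_derivative_psComp_mul (A G : ℂ⟦X⟧) (hφ : constantCoeff φ = 0) (p : ℕ) :
    coeff p (d⁄dX ℂ (psComp A φ) * G) =
      ∑ k ∈ range (p + 2), coeff k A * coeff p (d⁄dX ℂ (φ ^ k) * G) := by
  have htail := X_pow_dvd_iff.mp (dvd_mul_of_dvd_left
    (X_pow_dvd_derivative (X_pow_dvd_psComp_sub_sum A hφ (p + 2))) G) p p.lt_succ_self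
  rw [map_sub, sub_mul, map_sub, sub_eq_zero] at htail
  rw [htail, map_sum, sum_mul, map_sum]
  refine sum_congr rfl fun k _ => ?_
  rw [Derivation.map_smul, smul_mul_assoc, LinearMap.map_smul, smul_eq_mul]

end Composition

/-- The Lagrange inversion formula:
`[zⁿ] f(w(z)) = (1/n) [z^{n-1}] f'(z) (1/g(z))ⁿ`, where `w` is the compositional
inverse of `z g(z)` and `g(0) = 1`. -/
theorem lagrange_inversion (f g : PowerSeries ℂ)
    (hg : PowerSeries.constantCoeff g = 1)
    (w : PowerSeries ℂ) (hw0 : PowerSeries.constantCoeff w = 0)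
    (hw : psComp (PowerSeries.X * g) w = PowerSeries.X)
    (n : ℕ) (hn : 1 ≤ n) :
    PowerSeries.coeff n (psComp f w) =
      (1 / (n : ℂ)) *
        PowerSeries.coeff (n - 1) (PowerSeries.derivativeFun f * (g⁻¹) ^ n) := by
  have hφ : constantCoeff (X * g : ℂ⟦X⟧) = 0 := by simp
  have hinv : subst (X * g) w = X :=
    subst_eq_X_of_subst_eq_X hφ (by simp [hg]) (HasSubst.of_constantCoeff_zero' hw0)
      (by rwa [← psComp_eq_subst _ hw0])
  have hf : psComp (psComp f w) (X * g) = f := by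
    rw [psComp_eq_subst _ hw0, psComp_eq_subst _ hφ, subst_comp_subst_apply
      (HasSubst.of_constantCoeff_zero' hw0) (HasSubst.of_constantCoeff_zero' hφ), hinv, X_subst]
  obtain ⟨p, rfl⟩ := Nat.exists_eq_add_of_le' hn
  have hcoeff : coeff p (d⁄dX ℂ f * g⁻¹ ^ (p + 1)) = coeff (p + 1) (psComp f w) * (p + 1) := by
    conv_lhs => rw [← hf]
    simp_rw [coeff_derivative_psComp_mul _ _ hφ,
      coeff_derivative_X_mul_pow_mul_inv_pow (hg ▸ one_ne_zero), mul_ite, mul_zero]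
    simp
  change _ = _ * coeff (p + 1 - 1) (d⁄dX ℂ f * _)
  rw [Nat.add_sub_cancel, hcoeff]
  push_cast
  field_simp
end

section
/- The Mittag-Leffler polynomials M_n(x), defined by \sum_{n\ge 0} M_n(x) z^n/n! = \left(\frac{1+z}{1-z}\right)^x, satisfy M_n(x) = n! \sum_{k=1}^n \binom{n-1}{n-k} 2^k \binom{x}{k} for all n\ge 1, and M_0(x)=1. -/
/-! Write `(1 + z) / (1 - z) = 1 + w` with `w = 2z / (1 - z)`; then `((1 + z) / (1 - z))^x`
should be `∑ₖ C(x, k) wᵏ`, and the coefficient of `zⁿ` in `wᵏ = 2ᵏ zᵏ (1 - z)⁻ᵏ` is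
`2ᵏ C(n - 1, n - k)`.
Instead of proving identities between logarithms, both sides are identified as the solution of
`y' = u' y`, `y(0) = 1`, where `u = x (log (1 + z) - log (1 - z))`: the exponential side by the
chain rule, the binomial side by the chain rule applied to `(1 + z) B' = x B` for
`B = ∑ₖ C(x, k) zᵏ`, together with `(1 + w) u' = x w'`. Such a solution is unique because the
quotient of two of them has derivative zero. -/

open PowerSeries

/-- `e^u` for a power series `u` with zero constant coefficient. -/
noncomputable def psExp (u : PowerSeries ℂ) : PowerSeries ℂ :=
  psComp (PowerSeries.exp ℂ) u

/-- The power series `log(1 + z) = ∑_{n≥1} (-1)^{n+1} zⁿ/n`. -/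
noncomputable def logOneAdd : PowerSeries ℂ :=
  PowerSeries.mk fun n => if n = 0 then 0 else (-1) ^ (n + 1) / (n : ℂ)

/-- The power series `log(1 - z) = -∑_{n≥1} zⁿ/n`. -/
noncomputable def logOneSub : PowerSeries ℂ :=
  PowerSeries.mk fun n => if n = 0 then 0 else -(1 / (n : ℂ))

/-- The generalized binomial coefficient `m(m-1)⋯(m-j+1)/j!`. -/
noncomputable def genBinom (m : ℂ) (j : ℕ) : ℂ :=
  (∏ i ∈ Finset.range j, (m - i)) / (j.factorial : ℂ)

namespace PowerSeries

variable {R : Type*} [CommRing R]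

theorem coeff_pow_of_lt {g : R⟦X⟧} (hg : constantCoeff g = 0) {k n : ℕ} (h : n < k) :
    coeff n (g ^ k) = 0 :=
  coeff_of_lt_order n ((Nat.cast_lt.mpr h).trans_le (le_order_pow_of_constantCoeff_eq_zero k hg))

theorem coeff_subst_eq_sum_range {f g : R⟦X⟧} (hg : constantCoeff g = 0) (n : ℕ) :
    coeff n (f.subst g) = ∑ k ∈ Finset.range (n + 1), coeff k f * coeff n (g ^ k) := by
  rw [coeff_subst' (HasSubst.of_constantCoeff_zero' hg)]
  refine finsum_eq_sum_of_support_subset _ fun k hk => ?_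
  by_contra hkn
  exact hk (by simp only [coeff_pow_of_lt hg (by simpa using hkn), smul_zero])

theorem constantCoeff_subst_of_constantCoeff_zero {f g : R⟦X⟧} (hg : constantCoeff g = 0) :
    constantCoeff (f.subst g) = constantCoeff f := by
  simp only [← coeff_zero_eq_constantCoeff_apply, coeff_subst_eq_sum_range hg, zero_add,
    Finset.sum_range_one, pow_zero, coeff_one, if_true, mul_one]

theorem eq_of_derivative_eq_mul [IsAddTorsionFree R] {f g h : R⟦X⟧} (hf : IsUnit f)
    (hdf : d⁄dX R f = h * f) (hdg : d⁄dX R g = h * g)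
    (h0 : constantCoeff f = constantCoeff g) : f = g := by
  obtain ⟨u, rfl⟩ := hf
  have hquot : g * ↑u⁻¹ = 1 := by
    refine derivative.ext ?_ ?_
    · rw [Derivation.leibniz, derivative_inv, hdf, hdg, derivative_one, smul_eq_mul, smul_eq_mul]
      linear_combination (-(h * g * ↑u⁻¹)) * u.inv_mul
    · rw [map_mul, map_one, ← h0, ← map_mul, u.mul_inv, map_one]
  rw [← mul_one (u : R⟦X⟧), ← hquot, mul_left_comm, u.mul_inv, mul_one]

theorem one_add_X_mul_mk_neg_one_pow : (1 + X) * mk (fun n => (-1 : R) ^ n) = 1 := by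
  have h := congrArg (rescale (-1 : R)) (mk_one_mul_one_sub_eq_one (S := R))
  rw [map_mul, map_sub, map_one, rescale_X, map_neg, map_one, neg_mul, one_mul,
    sub_neg_eq_add] at h
  rw [mul_comm]
  convert h using 2
  ext n
  simp [coeff_rescale]

theorem derivative_mk_one : d⁄dX R (mk 1) = mk 1 ^ 2 := by
  have h := congrArg (d⁄dX R) (mk_one_mul_one_sub_eq_one (S := R))
  rw [Derivation.leibniz, map_sub, derivative_one, derivative_X, smul_eq_mul,
    smul_eq_mul] at h
  linear_combination mk 1 * h - d⁄dX R (mk 1) * mk_one_mul_one_sub_eq_one (S := R)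

end PowerSeries

open PowerSeries

theorem psComp_eq_subst_s18 {f g : ℂ⟦X⟧} (hg : constantCoeff g = 0) : psComp f g = f.subst g := by
  ext n
  rw [psComp, coeff_mk, coeff_subst_eq_sum_range hg]

theorem constantCoeff_psExp {u : ℂ⟦X⟧} (hu : constantCoeff u = 0) :
    constantCoeff (psExp u) = 1 := by
  rw [psExp, psComp_eq_subst_s18 hu, constantCoeff_subst_of_constantCoeff_zero hu, constantCoeff_exp]

theorem derivative_psExp {u : ℂ⟦X⟧} (hu : constantCoeff u = 0) :
    d⁄dX ℂ (psExp u) = d⁄dX ℂ u * psExp u := by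
  rw [psExp, psComp_eq_subst_s18 hu, derivative_subst (HasSubst.of_constantCoeff_zero' hu),
    derivative_exp, mul_comm]

theorem derivative_logOneAdd : d⁄dX ℂ logOneAdd = mk fun n => (-1) ^ n := by
  ext n
  have : (n + 1 : ℂ) ≠ 0 := Nat.cast_add_one_ne_zero n
  rw [coeff_derivative, logOneAdd, coeff_mk, coeff_mk, if_neg n.succ_ne_zero]
  push_cast
  field_simp
  ring

theorem derivative_logOneSub : d⁄dX ℂ logOneSub = -mk 1 := by
  ext n
  have : (n + 1 : ℂ) ≠ 0 := Nat.cast_add_one_ne_zero n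
  rw [coeff_derivative, logOneSub, coeff_mk, map_neg, coeff_mk, if_neg n.succ_ne_zero]
  push_cast
  field_simp
  simp

theorem genBinom_succ (x : ℂ) (k : ℕ) :
    (k + 1) * genBinom x (k + 1) = (x - k) * genBinom x k := by
  have : (k.factorial : ℂ) ≠ 0 := Nat.cast_ne_zero.mpr k.factorial_ne_zero
  rw [genBinom, genBinom, Finset.prod_range_succ, Nat.factorial_succ]
  push_cast
  field_simp

theorem one_add_X_mul_derivative_mk_genBinom (x : ℂ) :
    (1 + X) * d⁄dX ℂ (mk (genBinom x)) = x • mk (genBinom x) := by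
  ext n
  rw [add_mul, one_mul, map_add, coeff_smul, coeff_derivative, coeff_mk, coeff_mk, smul_eq_mul]
  cases n with
  | zero => simpa using genBinom_succ x 0
  | succ n =>
    rw [coeff_succ_X_mul, coeff_derivative, coeff_mk]
    have h := genBinom_succ x (n + 1)
    push_cast at h ⊢
    linear_combination h

noncomputable def twoXDivOneSubX : ℂ⟦X⟧ := 2 * X * mk 1

theorem constantCoeff_twoXDivOneSubX : constantCoeff twoXDivOneSubX = 0 := by
  simp [twoXDivOneSubX]

theorem derivative_twoXDivOneSubX : d⁄dX ℂ twoXDivOneSubX = 2 * mk 1 ^ 2 := by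
  have h2 : d⁄dX ℂ (2 : ℂ⟦X⟧) = 0 := by exact_mod_cast Derivation.map_natCast _ 2
  rw [twoXDivOneSubX, Derivation.leibniz, Derivation.leibniz, h2, derivative_X,
    derivative_mk_one, smul_eq_mul, smul_eq_mul, smul_eq_mul, smul_eq_mul]
  linear_combination -(2 * mk 1) * mk_one_mul_one_sub_eq_one (S := ℂ)

theorem one_add_twoXDivOneSubX_mul_derivative_log :
    (1 + twoXDivOneSubX) * d⁄dX ℂ (logOneAdd - logOneSub) = d⁄dX ℂ twoXDivOneSubX := by
  rw [map_sub, derivative_logOneAdd, derivative_logOneSub, derivative_twoXDivOneSubX,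
    twoXDivOneSubX]
  linear_combination mk 1 * one_add_X_mul_mk_neg_one_pow (R := ℂ) -
    ((mk fun n => (-1) ^ n) + 2 * mk 1) * mk_one_mul_one_sub_eq_one (S := ℂ)

theorem coeff_pow_twoXDivOneSubX {k n : ℕ} (hk : 1 ≤ k) (hkn : k ≤ n) :
    coeff n (twoXDivOneSubX ^ k) = 2 ^ k * (n - 1).choose (n - k) := by
  obtain ⟨j, rfl⟩ : ∃ j, k = j + 1 := ⟨k - 1, by omega⟩
  rw [twoXDivOneSubX, mul_pow, mul_pow, mk_one_pow_eq_mk_choose_add, ← map_ofNat C, ← map_pow,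
    mul_assoc, coeff_C_mul, coeff_X_pow_mul', if_pos hkn, coeff_mk,
    show j + (n - (j + 1)) = n - 1 by omega, show n - (j + 1) = n - 1 - j by omega,
    Nat.choose_symm (by omega)]

theorem coeff_subst_twoXDivOneSubX (f : ℂ⟦X⟧) {n : ℕ} (hn : 1 ≤ n) :
    coeff n (f.subst twoXDivOneSubX) =
      ∑ k ∈ Finset.Icc 1 n, ((n - 1).choose (n - k) : ℂ) * 2 ^ k * coeff k f := by
  rw [coeff_subst_eq_sum_range constantCoeff_twoXDivOneSubX, Finset.range_eq_Ico,
    Finset.sum_eq_sum_Ico_succ_bot (by omega), pow_zero, coeff_one, if_neg (by omega), mul_zero,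
    zero_add, zero_add, Finset.Ico_add_one_right_eq_Icc]
  refine Finset.sum_congr rfl fun k hk => ?_
  rw [Finset.mem_Icc] at hk
  rw [coeff_pow_twoXDivOneSubX hk.1 hk.2]
  ring

theorem derivative_mk_genBinom_subst (x : ℂ) :
    d⁄dX ℂ ((mk (genBinom x)).subst twoXDivOneSubX) =
      d⁄dX ℂ (x • (logOneAdd - logOneSub)) * (mk (genBinom x)).subst twoXDivOneSubX := by
  have hw := HasSubst.of_constantCoeff_zero' constantCoeff_twoXDivOneSubX
  have hne : 1 + twoXDivOneSubX ≠ 0 := fun h => by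
    simpa [constantCoeff_twoXDivOneSubX] using congrArg constantCoeff h
  have hsubst := congrArg (subst twoXDivOneSubX) (one_add_X_mul_derivative_mk_genBinom x)
  rw [subst_mul hw, subst_add hw, subst_smul hw, subst_X hw, ← coe_substAlgHom hw, map_one,
    coe_substAlgHom] at hsubst
  refine mul_left_cancel₀ hne ?_
  rw [derivative_subst hw, Derivation.map_smul, ← mul_assoc, hsubst, smul_mul_assoc,
    smul_mul_assoc, mul_smul_comm, ← mul_assoc, one_add_twoXDivOneSubX_mul_derivative_log,
    mul_comm]

/-- Mittag-Leffler polynomials, defined by `∑ Mₙ(x) zⁿ/n! = ((1+z)/(1-z))^x`,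
satisfy `M₀(x) = 1` and `Mₙ(x) = n! ∑_{k=1}^n C(n-1, n-k) 2^k C(x,k)` for `n ≥ 1`. -/
theorem mittagLeffler_expansion (x : ℂ) (M : ℕ → ℂ)
    (hM : (PowerSeries.mk fun n => M n / (n.factorial : ℂ)) =
      psExp (x • (logOneAdd - logOneSub))) :
    M 0 = 1 ∧
      ∀ n : ℕ, 1 ≤ n →
        M n = (n.factorial : ℂ) *
          ∑ k ∈ Finset.Icc 1 n,
            ((n - 1).choose (n - k) : ℂ) * 2 ^ k * genBinom x k := by
  have hu : constantCoeff (x • (logOneAdd - logOneSub)) = 0 := by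
    rw [← coeff_zero_eq_constantCoeff_apply]
    simp [logOneAdd, logOneSub]
  have hsubst0 : constantCoeff ((mk (genBinom x)).subst twoXDivOneSubX) = 1 := by
    rw [constantCoeff_subst_of_constantCoeff_zero constantCoeff_twoXDivOneSubX,
      ← coeff_zero_eq_constantCoeff_apply, coeff_mk, genBinom]
    simp
  have hexp : psExp (x • (logOneAdd - logOneSub)) = (mk (genBinom x)).subst twoXDivOneSubX :=
    eq_of_derivative_eq_mul (isUnit_iff_constantCoeff.mpr (by simp [constantCoeff_psExp hu]))
      (derivative_psExp hu) (derivative_mk_genBinom_subst x)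
      (by rw [constantCoeff_psExp hu, hsubst0])
  have hcoeff (n : ℕ) : M n = n.factorial * coeff n ((mk (genBinom x)).subst twoXDivOneSubX) := by
    have h := congrArg (coeff n) hM
    rw [coeff_mk, hexp, div_eq_iff (Nat.cast_ne_zero.mpr n.factorial_ne_zero)] at h
    rw [h, mul_comm]
  refine ⟨?_, fun n hn => ?_⟩
  · rw [hcoeff, coeff_zero_eq_constantCoeff_apply, hsubst0, Nat.factorial_zero, Nat.cast_one,
      one_mul]
  · rw [hcoeff, coeff_subst_twoXDivOneSubX _ hn]
    simp only [coeff_mk]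
end
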